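/- For every density matrix ρ on ℂ², the geometric coherence is given explicitly by C_g(ρ) = ½(1 − √(1 − 4|ρ_{12}|²)), where ρ_{12} is the off-diagonal entry of ρ; equivalently, the maximal fidelity with incoherent states is F(ρ) = ½(1 + √(1 − 4|ρ_{12}|²)). -/

import Mathlib

open scoped BigOperators ComplexOrder

noncomputable section
open scoped Classical

/-- Positive semidefinite square root of a matrix (junk value `0` if not PSD). -/
noncomputable def msqrt {d : ℕ} (A : Matrix (Fin d) (Fin d) ℂ) : Matrix (Fin d) (Fin d) ℂ :=
  if h : A.PosSemidef then
    (h.1.eigenvectorUnitary : Matrix (Fin d) (Fin d) ℂ) *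
      Matrix.diagonal ((↑) ∘ (Real.sqrt ·) ∘ h.1.eigenvalues) *
      (star h.1.eigenvectorUnitary : Matrix (Fin d) (Fin d) ℂ)
  else 0

/-- A density matrix: positive semidefinite with trace one. -/
def IsDensityMatrix {d : ℕ} (ρ : Matrix (Fin d) (Fin d) ℂ) : Prop :=
  ρ.PosSemidef ∧ ρ.trace = 1

/-- An incoherent state: a density matrix diagonal in the standard basis. -/
def IsIncoherent {d : ℕ} (σ : Matrix (Fin d) (Fin d) ℂ) : Prop :=
  IsDensityMatrix σ ∧ ∀ i j, i ≠ j → σ i j = 0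

/-- Fidelity `F(ρ,σ) = (Tr √(√σ ρ √σ))²`. -/
noncomputable def fid {d : ℕ} (ρ σ : Matrix (Fin d) (Fin d) ℂ) : ℝ :=
  ((msqrt (msqrt σ * ρ * msqrt σ)).trace).re ^ 2

/-- Maximal fidelity with incoherent states. -/
noncomputable def maxFid {d : ℕ} (ρ : Matrix (Fin d) (Fin d) ℂ) : ℝ :=
  sSup {x : ℝ | ∃ σ, IsIncoherent σ ∧ x = fid ρ σ}

/-- Geometric coherence `C_g(ρ) = 1 − F(ρ)`. -/
noncomputable def geomCoh {d : ℕ} (ρ : Matrix (Fin d) (Fin d) ℂ) : ℝ :=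
  1 - maxFid ρ

/-- A POVM with `n` outcomes on a Hilbert space. -/
def IsPOVM {H : Type*} [NormedAddCommGroup H] [InnerProductSpace ℂ H] [CompleteSpace H]
    {n : ℕ} (M : Fin n → H →L[ℂ] H) : Prop :=
  (∀ i, (M i).IsPositive) ∧ (∑ i, M i) = 1

/-- Optimal success probability of ambiguous discrimination of the ensemble `{ψ i, η i}`. -/
noncomputable def optSuccess {H : Type*} [NormedAddCommGroup H] [InnerProductSpace ℂ H]
    [CompleteSpace H] {n : ℕ} (ψ : Fin n → H) (η : Fin n → ℝ) : ℝ :=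
  sSup {x : ℝ | ∃ M : Fin n → H →L[ℂ] H, IsPOVM M ∧
    x = ∑ i, η i * ((inner ℂ (ψ i) ((M i) (ψ i)) : ℂ)).re}

/-- Optimal von Neumann success probability (over orthonormal bases of `ℂ^d`). -/
noncomputable def vnSuccess {d : ℕ} (ψ : Fin d → EuclideanSpace ℂ (Fin d))
    (η : Fin d → ℝ) : ℝ :=
  sSup {x : ℝ | ∃ f : Fin d → EuclideanSpace ℂ (Fin d), Orthonormal ℂ f ∧
    x = ∑ i, η i * ‖(inner ℂ (f i) (ψ i) : ℂ)‖ ^ 2}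

/-- The column `√ρ e_i` of the square root of `ρ`, as a vector of `ℂ^d`. -/
noncomputable def sqrtCol {d : ℕ} (ρ : Matrix (Fin d) (Fin d) ℂ) (i : Fin d) :
    EuclideanSpace ℂ (Fin d) :=
  WithLp.toLp 2 (fun j => msqrt ρ j i)

/-- The state `|ψ_i⟩ = η_i^{-1/2} √ρ e_i` of the discrimination ensemble associated to `ρ`. -/
noncomputable def discVec {d : ℕ} (ρ : Matrix (Fin d) (Fin d) ℂ) (i : Fin d) :
    EuclideanSpace ℂ (Fin d) :=
  ((Real.sqrt ((ρ i i).re) : ℂ))⁻¹ • sqrtCol ρ i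

/-- The QSD-state of an ensemble: `ρ_{ij} = √(η_i η_j) ⟨ψ_i|ψ_j⟩`. -/
noncomputable def qsdState {H : Type*} [NormedAddCommGroup H] [InnerProductSpace ℂ H]
    {n : ℕ} (ψ : Fin n → H) (η : Fin n → ℝ) : Matrix (Fin n) (Fin n) ℂ :=
  fun i j => (Real.sqrt (η i * η j) : ℂ) * (inner ℂ (ψ i) (ψ j) : ℂ)

/-! ### Auxiliary lemmas for the qubit geometric-coherence formula -/

open scoped MatrixOrder in
lemma msqrt_eq_sqrt {d : ℕ} {A : Matrix (Fin d) (Fin d) ℂ} (hA : A.PosSemidef) :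
    msqrt A = CFC.sqrt A := by
  rw [msqrt, dif_pos hA, CFC.sqrt_eq_cfc, cfc_nnreal_eq_real _ A, hA.1.cfc_eq]
  simp only [Matrix.IsHermitian.cfc]
  congr 3
  funext i
  simp [Real.coe_sqrt, Real.coe_toNNReal', max_eq_left (hA.eigenvalues_nonneg i)]

open scoped MatrixOrder in
lemma msqrt_eq' {d : ℕ} {A B : Matrix (Fin d) (Fin d) ℂ} (hB : B.PosSemidef)
    (hBA : B ^ 2 = A) : msqrt A = B := by
  have hA : A.PosSemidef := hBA ▸ hB.pow 2
  rw [msqrt_eq_sqrt hA]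
  exact CFC.sqrt_unique (by rw [← sq]; exact hBA) hB.nonneg

lemma diag_nn' {A : Matrix (Fin 2) (Fin 2) ℂ} (hA : A.PosSemidef) (i : Fin 2) : 0 ≤ A i i := by
  have := hA.2 (Finsupp.single i 1)
  fin_cases i <;> simpa [Pi.single_apply] using this

lemma diag_real' {A : Matrix (Fin 2) (Fin 2) ℂ} (hA : A.PosSemidef) (i : Fin 2) :
    A i i = ((A i i).re : ℂ) := by
  have h := (Complex.nonneg_iff.mp (diag_nn' hA i)).2
  exact Complex.ext rfl (by simpa using h.symm)

lemma det_nn' {A : Matrix (Fin 2) (Fin 2) ℂ} (hA : A.PosSemidef) : 0 ≤ A.det := by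
  rw [hA.1.det_eq_prod_eigenvalues]
  exact Finset.prod_nonneg fun i _ => RCLike.ofReal_nonneg.mpr (hA.eigenvalues_nonneg i)

lemma det_rho_eq {ρ : Matrix (Fin 2) (Fin 2) ℂ} (hρ : ρ.PosSemidef) :
    ρ.det = (((ρ 0 0).re * (ρ 1 1).re - ‖ρ 0 1‖^2 : ℝ) : ℂ) := by
  rw [Matrix.det_fin_two]
  have h10 : ρ 1 0 = starRingEnd ℂ (ρ 0 1) := by
    have := hρ.1.apply 1 0; simpa using this.symm
  rw [h10, Complex.mul_conj, diag_real' hρ 0, diag_real' hρ 1,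
    Complex.normSq_eq_norm_sq]
  push_cast
  simp only [Complex.ofReal_re]
  try ring

lemma tr_sq' (N : Matrix (Fin 2) (Fin 2) ℂ) : N.trace ^ 2 = (N * N).trace + 2 * N.det := by
  simp [Matrix.trace_fin_two, Matrix.det_fin_two, Matrix.mul_apply, Fin.sum_univ_two]; ring

open scoped MatrixOrder in
lemma fid_diag (ρ : Matrix (Fin 2) (Fin 2) ℂ) (hρ : ρ.PosSemidef) (p : ℝ)
    (hp0 : 0 ≤ p) (hp1 : p ≤ 1) :
    fid ρ (Matrix.diagonal ![(p:ℂ), ((1-p:ℝ):ℂ)]) =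
      p * (ρ 0 0).re + (1-p) * (ρ 1 1).re +
        2 * Real.sqrt (p * (1-p) * ((ρ 0 0).re * (ρ 1 1).re - ‖ρ 0 1‖^2)) := by
  set a := (ρ 0 0).re with ha
  set c := (ρ 1 1).re with hc
  set S : Matrix (Fin 2) (Fin 2) ℂ :=
    Matrix.diagonal ![((Real.sqrt p : ℝ):ℂ), ((Real.sqrt (1-p) : ℝ):ℂ)] with hSdef
  have hq0 : (0:ℝ) ≤ 1 - p := by linarith
  have hSsq : S ^ 2 = Matrix.diagonal ![(p:ℂ), ((1-p:ℝ):ℂ)] := by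
    rw [pow_two, hSdef, Matrix.diagonal_mul_diagonal]
    refine congrArg Matrix.diagonal (funext fun i => ?_)
    fin_cases i <;> simp <;> norm_cast <;> rw [Real.mul_self_sqrt (by linarith)]
  have hSpsd : S.PosSemidef :=
    Matrix.PosSemidef.diagonal (fun i => by
      fin_cases i <;> exact Complex.zero_le_real.mpr (Real.sqrt_nonneg _))
  have h1 : msqrt (Matrix.diagonal ![(p:ℂ), ((1-p:ℝ):ℂ)]) = S := msqrt_eq' hSpsd hSsq
  have hSH : S.conjTranspose = S := hSpsd.1
  set M := S * ρ * S with hMdef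
  have hM : M.PosSemidef := by
    have := hρ.conjTranspose_mul_mul_same S
    rwa [hSH] at this
  set N := msqrt M with hNdef
  have hN : N.PosSemidef := by rw [hNdef, msqrt_eq_sqrt hM]; exact Matrix.nonneg_iff_posSemidef.mp (CFC.sqrt_nonneg M)
  have hNN : N * N = M := by rw [hNdef, msqrt_eq_sqrt hM]; exact CFC.sqrt_mul_sqrt_self M hM.nonneg
  set T := (N.trace).re with hT
  have htrN : N.trace = (T:ℂ) := by
    rw [Matrix.trace_fin_two, diag_real' hN 0, diag_real' hN 1, hT, Matrix.trace_fin_two]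
    push_cast
    rw [diag_real' hN 0, diag_real' hN 1]
    simp
  set r := (N.det).re with hr
  have hdetN : N.det = (r:ℂ) := by
    have h := (Complex.nonneg_iff.mp (det_nn' hN)).2
    exact Complex.ext rfl (by simpa using h.symm)
  have hr0 : 0 ≤ r := by
    have := (Complex.nonneg_iff.mp (det_nn' hN)).1; simpa [hr] using this
  have hdetρ : ρ.det = ((a * c - ‖ρ 0 1‖^2 : ℝ) : ℂ) := det_rho_eq hρ
  have hdetM : M.det = ((p * (1-p) * (a * c - ‖ρ 0 1‖^2) : ℝ) : ℂ) := by
    rw [hMdef, Matrix.det_mul, Matrix.det_mul, hdetρ]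
    have hdS : S.det = ((Real.sqrt p * Real.sqrt (1-p) : ℝ) : ℂ) := by
      rw [hSdef, Matrix.det_diagonal, Fin.prod_univ_two]; push_cast; simp
    rw [hdS]
    norm_cast
    have e1 : Real.sqrt p * Real.sqrt p = p := Real.mul_self_sqrt hp0
    have e2 : Real.sqrt (1-p) * Real.sqrt (1-p) = 1 - p := Real.mul_self_sqrt hq0
    set X := a * c - ‖ρ 0 1‖^2
    linear_combination X * (Real.sqrt (1-p) * Real.sqrt (1-p)) * e1 + X * p * e2
  have hr2 : r ^ 2 = p * (1-p) * (a * c - ‖ρ 0 1‖^2) := by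
    have hdd : N.det * N.det = M.det := by rw [← Matrix.det_mul, hNN]
    rw [hdetN, hdetM] at hdd
    have h2 : ((r * r : ℝ) : ℂ) = ((p * (1-p) * (a * c - ‖ρ 0 1‖^2) : ℝ) : ℂ) := by
      push_cast; exact_mod_cast hdd
    have h3 := Complex.ofReal_injective h2
    rw [pow_two, h3]
  have htrM : M.trace = ((p * a + (1-p) * c : ℝ) : ℂ) := by
    rw [hMdef, Matrix.trace_fin_two]
    have e0 : (S * ρ * S) 0 0 = (Real.sqrt p : ℂ)^2 * ρ 0 0 := by
      simp [hSdef, Matrix.mul_apply, Fin.sum_univ_two, Matrix.diagonal]; ring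
    have e1 : (S * ρ * S) 1 1 = (Real.sqrt (1-p) : ℂ)^2 * ρ 1 1 := by
      simp [hSdef, Matrix.mul_apply, Fin.sum_univ_two, Matrix.diagonal]; ring
    rw [e0, e1, diag_real' hρ 0, diag_real' hρ 1,
      show ((Real.sqrt p : ℝ):ℂ)^2 = ((p:ℝ):ℂ) from by
        norm_cast; exact Real.sq_sqrt hp0,
      show ((Real.sqrt (1-p) : ℝ):ℂ)^2 = ((1-p:ℝ):ℂ) from by
        norm_cast; exact Real.sq_sqrt hq0]
    push_cast
    ring
  have key : (T:ℂ)^2 = ((p * a + (1-p) * c : ℝ):ℂ) + 2 * (r:ℂ) := by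
    rw [← htrN, tr_sq' N, hNN, htrM, hdetN]
  have keyR : T^2 = p * a + (1-p) * c + 2 * r := by exact_mod_cast key
  have hsq : Real.sqrt (p * (1-p) * (a * c - ‖ρ 0 1‖^2)) = r := by
    rw [← hr2, Real.sqrt_sq hr0]
  rw [fid, h1, ← hMdef, ← hNdef, ← hT, keyR, hsq]

lemma bound_aux (a c D p : ℝ) (hac : a + c = 1) (hD : 0 ≤ D)
    (hp0 : 0 ≤ p) (hp1 : p ≤ 1) :
    p*a + (1-p)*c + 2*Real.sqrt (p*(1-p)*D) ≤ (1 + Real.sqrt ((a-c)^2 + 4*D))/2 := by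
  have hpq : 0 ≤ p * (1-p) := mul_nonneg hp0 (by linarith)
  set w := Real.sqrt (p*(1-p)) with hw
  set v := Real.sqrt D with hv
  have hwv : Real.sqrt (p*(1-p)*D) = w * v := Real.sqrt_mul hpq D
  have hw0 : 0 ≤ w := Real.sqrt_nonneg _
  have hv0 : 0 ≤ v := Real.sqrt_nonneg _
  have hw2 : w * w = p * (1-p) := Real.mul_self_sqrt hpq
  have hv2 : v * v = D := Real.mul_self_sqrt hD
  set R := Real.sqrt ((a-c)^2 + 4*D) with hR
  have hR0 : 0 ≤ R := Real.sqrt_nonneg _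
  have hR2 : R * R = (a-c)^2 + 4*D := Real.mul_self_sqrt (by positivity)
  rw [hwv]
  nlinarith [sq_nonneg (2*(a-c)*w - 2*(2*p-1)*v), sq_nonneg (R - (2*p-1)*(a-c) - 4*w*v),
    mul_nonneg hw0 hv0, sq_nonneg ((2*p-1)*(a-c) + 4*w*v - R)]

lemma attain_aux (a c D : ℝ) (hac : a + c = 1) (hD : 0 ≤ D) :
    ∃ p : ℝ, 0 ≤ p ∧ p ≤ 1 ∧
      p*a + (1-p)*c + 2*Real.sqrt (p*(1-p)*D) = (1 + Real.sqrt ((a-c)^2 + 4*D))/2 := by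
  set t := a - c with ht
  set R := Real.sqrt (t^2 + 4*D) with hR
  have hR0 : 0 ≤ R := Real.sqrt_nonneg _
  have hR2 : R^2 = t^2 + 4*D := Real.sq_sqrt (by positivity)
  rcases eq_or_lt_of_le hR0 with h0 | hRpos
  · have hD0 : D = 0 := by nlinarith [sq_nonneg t]
    refine ⟨1/2, by norm_num, by norm_num, ?_⟩
    rw [hD0, mul_zero, Real.sqrt_zero, ← h0]
    linarith
  · have habs : |t| ≤ R := by
      rw [← Real.sqrt_sq_eq_abs, hR]
      exact Real.sqrt_le_sqrt (by linarith)
    obtain ⟨htR1, htR2⟩ := abs_le.mp habs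
    refine ⟨(R + t)/(2*R), div_nonneg (by linarith) (by linarith), ?_, ?_⟩
    · rw [div_le_one (by linarith)]; linarith
    · have h1p : 1 - (R + t)/(2*R) = (R - t)/(2*R) := by field_simp; ring
      rw [h1p]
      have key : ((R+t)/(2*R)) * ((R-t)/(2*R)) * D = (D/R)^2 := by
        linear_combination (1/4)*R⁻¹^2*D*hR2
      rw [key, Real.sqrt_sq (div_nonneg hD (by linarith))]
      have hi : R * R⁻¹ = 1 := mul_inv_cancel₀ hRpos.ne'
      linear_combination (1/2)*(a+c)*hi + (1/2)*hac + (1/2)*R*hi - (1/2)*R⁻¹*t*ht - (1/2)*R⁻¹*hR2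

lemma incoh_rep {σ : Matrix (Fin 2) (Fin 2) ℂ} (h : IsIncoherent σ) :
    ∃ p : ℝ, 0 ≤ p ∧ p ≤ 1 ∧ σ = Matrix.diagonal ![(p:ℂ), ((1-p:ℝ):ℂ)] := by
  obtain ⟨⟨hpsd, htr⟩, hoff⟩ := h
  set p := (σ 0 0).re with hp
  have h00 : σ 0 0 = (p:ℂ) := diag_real' hpsd 0
  have htr2 : σ 0 0 + σ 1 1 = 1 := by rwa [Matrix.trace_fin_two] at htr
  have h11 : σ 1 1 = ((1 - p : ℝ):ℂ) := by
    rw [h00] at htr2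
    push_cast
    linear_combination htr2
  have hp0 : 0 ≤ p := (Complex.nonneg_iff.mp (diag_nn' hpsd 0)).1
  have hp1 : p ≤ 1 := by
    have h1 := (Complex.nonneg_iff.mp (diag_nn' hpsd 1)).1
    rw [h11] at h1
    have : (0:ℝ) ≤ 1 - p := by exact_mod_cast h1
    linarith
  refine ⟨p, hp0, hp1, ?_⟩
  ext i j
  fin_cases i <;> fin_cases j
  · simpa using h00
  · simpa using hoff 0 1 (by decide)
  · simpa using hoff 1 0 (by decide)
  · simpa using h11

lemma diag_incoh (p : ℝ) (hp0 : 0 ≤ p) (hp1 : p ≤ 1) :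
    IsIncoherent (Matrix.diagonal ![(p:ℂ), ((1-p:ℝ):ℂ)]) := by
  refine ⟨⟨Matrix.PosSemidef.diagonal (fun i => ?_), ?_⟩, fun i j hij => ?_⟩
  · fin_cases i
    · exact Complex.zero_le_real.mpr hp0
    · exact Complex.zero_le_real.mpr (by linarith)
  · rw [Matrix.trace_fin_two]
    simp only [Matrix.diagonal_apply_eq]
    push_cast
    simp
  · exact Matrix.diagonal_apply_ne _ hij

/-- Geometric coherence of a single-qubit state: `C_g(ρ) = (1 - √(1 - 4|ρ₁₂|²))/2`. -/
theorem geomCoh_qubit (ρ : Matrix (Fin 2) (Fin 2) ℂ) (hρ : IsDensityMatrix ρ) :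
    geomCoh ρ = (1 - Real.sqrt (1 - 4 * ‖ρ 0 1‖ ^ 2)) / 2 ∧
    maxFid ρ = (1 + Real.sqrt (1 - 4 * ‖ρ 0 1‖ ^ 2)) / 2 := by
  obtain ⟨hpsd, htr⟩ := hρ
  set a := (ρ 0 0).re with ha
  set c := (ρ 1 1).re with hc
  set D := a * c - ‖ρ 0 1‖^2 with hD
  have hac : a + c = 1 := by
    have h2 : ρ 0 0 + ρ 1 1 = 1 := by rwa [Matrix.trace_fin_two] at htr
    have := congrArg Complex.re h2
    simpa using this
  have hD0 : 0 ≤ D := by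
    have h1 := det_nn' hpsd
    rw [det_rho_eq hpsd] at h1
    exact Complex.zero_le_real.mp h1
  have hkey : (a - c)^2 + 4*D = 1 - 4 * ‖ρ 0 1‖^2 := by
    rw [hD]; nlinarith [hac]
  have hmax : maxFid ρ = (1 + Real.sqrt (1 - 4 * ‖ρ 0 1‖ ^ 2)) / 2 := by
    rw [maxFid]
    apply IsGreatest.csSup_eq
    constructor
    · obtain ⟨p, hp0, hp1, hpe⟩ := attain_aux a c D hac hD0
      refine ⟨Matrix.diagonal ![(p:ℂ), ((1-p:ℝ):ℂ)], diag_incoh p hp0 hp1, ?_⟩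
      rw [fid_diag ρ hpsd p hp0 hp1, ← ha, ← hc, ← hD, hpe, hkey]
    · rintro x ⟨σ, hσ, rfl⟩
      obtain ⟨p, hp0, hp1, rfl⟩ := incoh_rep hσ
      rw [fid_diag ρ hpsd p hp0 hp1, ← ha, ← hc, ← hD, ← hkey]
      exact bound_aux a c D p hac hD0 hp0 hp1
  exact ⟨by rw [geomCoh, hmax]; ring, hmax⟩

end
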